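/- Let a, b, c ∈ Aut(X*) be defined by the wreath recursion a = σ(c,b), b = (a,c), c = (b,a). Then the group G = ⟨a,b,c⟩ is isomorphic to the Baumslag–Solitar group BS(1,3) = ⟨s,t | t⁻¹ s t = s³⟩; explicitly, c = ab⁻¹a holds in G, the elements μ = b⁻¹a and b satisfy b⁻¹μb = μ³ and both have infinite order, and the homomorphism BS(1,3) → G determined by s ↦ b⁻¹a, t ↦ b is an isomorphism. -/

import Mathlib

/-- `WRec s f f₀ f₁` says that the tree automorphism `f` of the binary rooted tree
`X* = List Bool` is given by the wreath recursion `f = σˢ(f₀, f₁)`: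
the root permutation of `f` is the transposition `σ` when `s = true` and is trivial when
`s = false`, the section of `f` at the letter `0 = false` is `f₀`, and the section of `f`
at the letter `1 = true` is `f₁`. -/
def WRec (s : Bool) (f f₀ f₁ : Equiv.Perm (List Bool)) : Prop :=
  f [] = [] ∧ (∀ w : List Bool, f (false :: w) = s :: f₀ w) ∧
    (∀ w : List Bool, f (true :: w) = (!s) :: f₁ w)

/-- The single defining relator `t⁻¹ s t (sᵐ)⁻¹` of the Baumslag–Solitar group
`BS(1,m) = ⟨s, t | t⁻¹ s t = sᵐ⟩`, with `s` and `t` the two generators. -/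
def bsRels (m : ℤ) : Set (FreeGroup (Fin 2)) :=
  {(FreeGroup.of 1)⁻¹ * FreeGroup.of 0 * FreeGroup.of 1 * (FreeGroup.of 0 ^ m)⁻¹}

/-!
Read a word `w = w₀ w₁ …` as the integer `∑ wᵢ (-2)ⁱ` (`negabinary w`). On level `n` of the tree,
this identifies words with residues modulo `2 ^ n`, and the wreath recursions show that `a`, `b`,
`c` act as the affine maps `x ↦ (3x + 1)/9`, `(3x - 2)/9`, `(3x + 4)/9` of the `2`-adic integers;
base `-2` rather than `2` is what makes these translation parts integral. So `μ = b⁻¹a` is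
`x ↦ x + 1` and `b` has slope `1/3`, and the claimed identities hold because the affine maps
agree. For faithfulness, every element of `BS(1,3)` is `tᵖ sᵠ tʳ`, and `bᵏ = μᵠ` forces `k = 0`
(compare slopes `3⁻ᵏ` and `1`) and then `q = 0`.
-/

open Function

section BaumslagSolitar

variable {G : Type*} [Group G] {m : ℤ} {s t : G}

theorem inv_mul_zpow_mul_of_inv_mul_mul (h : t⁻¹ * s * t = s ^ m) (q : ℤ) :
    t⁻¹ * s ^ q * t = s ^ (m * q) := by
  rw [zpow_mul, ← h]
  simpa using (conj_zpow (a := t⁻¹) (b := s) (i := q)).symm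

theorem zpow_mul_pow_of_inv_mul_mul (h : t⁻¹ * s * t = s ^ m) (q : ℤ) (p : ℕ) :
    s ^ q * t ^ p = t ^ p * s ^ (m ^ p * q) := by
  induction p generalizing q with
  | zero => simp
  | succ p ih =>
    calc s ^ q * t ^ (p + 1) = t ^ p * (t * (t⁻¹ * s ^ (m ^ p * q) * t)) := by
          rw [pow_succ, ← mul_assoc, ih]; group
      _ = t ^ (p + 1) * s ^ (m ^ (p + 1) * q) := by
          rw [inv_mul_zpow_mul_of_inv_mul_mul h, pow_succ, pow_succ']; group

theorem exists_eq_pow_mul_zpow_mul_zpow_of_mem_closure (h : t⁻¹ * s * t = s ^ m) {x : G}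
    (hx : x ∈ Subgroup.closure {s, t}) : ∃ (p : ℕ) (q r : ℤ), x = t ^ p * s ^ q * t ^ r := by
  induction hx using Subgroup.closure_induction_left with
  | one => exact ⟨0, 0, 0, by simp⟩
  | mul_left y hy x _ ih =>
    obtain ⟨p, q, r, rfl⟩ := ih
    rcases hy with rfl | rfl
    · refine ⟨p, m ^ p + q, r, ?_⟩
      have := zpow_mul_pow_of_inv_mul_mul h 1 p
      rw [zpow_one, mul_one] at this
      rw [← mul_assoc, ← mul_assoc, this, zpow_add]; group
    · exact ⟨p + 1, q, r, by rw [pow_succ']; group⟩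
  | inv_mul_cancel y hy x _ ih =>
    obtain ⟨p, q, r, rfl⟩ := ih
    rcases hy with rfl | rfl
    · refine ⟨p, q - m ^ p, r, ?_⟩
      have := zpow_mul_pow_of_inv_mul_mul h (-1) p
      rw [zpow_neg_one, mul_neg_one] at this
      rw [← mul_assoc, ← mul_assoc, this, sub_eq_neg_add, zpow_add]; group
    · cases p with
      | zero =>
        refine ⟨0, m * q, r - 1, ?_⟩
        rw [← inv_mul_zpow_mul_of_inv_mul_mul h]; group
      | succ p => exact ⟨p, q, r, by rw [pow_succ']; group⟩

theorem PresentedGroup.inv_of_mul_of_mul_of_bsRels :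
    (PresentedGroup.of (rels := bsRels m) 1)⁻¹ * .of 0 * .of 1 = .of 0 ^ m := by
  rw [← mul_inv_eq_one]
  exact (QuotientGroup.eq_one_iff _).mpr (Subgroup.subset_normalClosure rfl)

theorem PresentedGroup.closure_bsRels_of :
    Subgroup.closure {.of 0, .of 1} = (⊤ : Subgroup (PresentedGroup (bsRels m))) := by
  rw [← PresentedGroup.closure_range_of]
  congr
  ext x
  simp [Fin.exists_fin_two, eq_comm]

def bsLift (h : t⁻¹ * s * t = s ^ m) : PresentedGroup (bsRels m) →* G :=
  PresentedGroup.toGroup (f := ![s, t]) <| by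
    rintro r rfl
    simp [h]

@[simp] theorem bsLift_of_zero (h : t⁻¹ * s * t = s ^ m) : bsLift h (.of 0) = s :=
  PresentedGroup.toGroup.of _

@[simp] theorem bsLift_of_one (h : t⁻¹ * s * t = s ^ m) : bsLift h (.of 1) = t :=
  PresentedGroup.toGroup.of _

theorem range_bsLift (h : t⁻¹ * s * t = s ^ m) : (bsLift h).range = Subgroup.closure {s, t} := by
  rw [MonoidHom.range_eq_map, ← PresentedGroup.closure_bsRels_of, MonoidHom.map_closure,
    Set.image_pair, bsLift_of_zero, bsLift_of_one]

theorem bsLift_injective (h : t⁻¹ * s * t = s ^ m)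
    (hst : ∀ k q : ℤ, t ^ k = s ^ q → k = 0 ∧ q = 0) : Injective (bsLift h) := by
  refine (injective_iff_map_eq_one _).mpr fun x hx ↦ ?_
  obtain ⟨p, q, r, rfl⟩ := exists_eq_pow_mul_zpow_mul_zpow_of_mem_closure
    PresentedGroup.inv_of_mul_of_mul_of_bsRels
    (PresentedGroup.closure_bsRels_of ▸ Subgroup.mem_top x)
  simp only [map_mul, map_pow, map_zpow, bsLift_of_zero, bsLift_of_one] at hx
  have hcycle : s ^ q * t ^ ((p : ℤ) + r) = 1 := by
    calc _ = (t ^ p)⁻¹ * (t ^ p * s ^ q * t ^ r) * t ^ p := by group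
      _ = 1 := by rw [hx]; group
  obtain ⟨hpr, hq⟩ := hst _ _ ((eq_inv_of_mul_eq_one_right hcycle).trans (zpow_neg s q).symm)
  obtain rfl : q = 0 := neg_eq_zero.mp hq
  obtain rfl : r = -p := by omega
  group

end BaumslagSolitar

def negabinary : List Bool → ℤ
  | [] => 0
  | x :: w => x.toNat - 2 * negabinary w

theorem negabinary_replicate_false (n : ℕ) : negabinary (List.replicate n false) = 0 := by
  induction n with
  | zero => rfl
  | succ n ih => simp [List.replicate_succ, negabinary, ih]

theorem eq_of_two_pow_dvd_negabinary_sub {w w' : List Bool} (hl : w.length = w'.length)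
    (hd : 2 ^ w.length ∣ negabinary w - negabinary w') : w = w' := by
  induction w generalizing w' with
  | nil => exact (List.length_eq_zero_iff.mp hl.symm).symm
  | cons x w ih =>
    obtain _ | ⟨y, w'⟩ := w'
    · simp at hl
    obtain ⟨k, hk⟩ := hd
    have hxy : x = y := by
      have : (2 : ℤ) ∣ x.toNat - y.toNat :=
        ⟨negabinary w - negabinary w' + 2 ^ w.length * k, by
          simp only [negabinary, List.length_cons, pow_succ] at hk; linear_combination hk⟩
      cases x <;> cases y <;> simp_all
    subst hxy
    congr
    refine ih (by simpa using hl) ⟨-k, ?_⟩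
    simp only [negabinary, List.length_cons, pow_succ] at hk
    exact mul_left_cancel₀ two_ne_zero (by linear_combination -hk)

theorem eq_zero_of_forall_two_pow_dvd {x : ℤ} (h : ∀ n : ℕ, 2 ^ n ∣ x) : x = 0 := by
  refine Int.eq_zero_of_abs_lt_dvd (h x.natAbs) ?_
  rw [Int.abs_eq_natAbs]
  exact_mod_cast Nat.lt_two_pow_self

theorem eq_zero_of_forall_two_pow_dvd_mul_negabinary_add {A B : ℤ}
    (h : ∀ w : List Bool, 2 ^ w.length ∣ A * negabinary w + B) : A = 0 ∧ B = 0 := by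
  have hB : B = 0 := eq_zero_of_forall_two_pow_dvd fun n ↦ by
    simpa [negabinary_replicate_false] using h (List.replicate n false)
  refine ⟨eq_zero_of_forall_two_pow_dvd fun n ↦ ?_, hB⟩
  have := h (true :: List.replicate n false)
  simp only [negabinary, negabinary_replicate_false, hB, List.length_cons,
    List.length_replicate] at this
  exact (pow_dvd_pow 2 n.le_succ).trans (by simpa using this)

/-- `g` maps `w` to a word of the same length whose `negabinary` value is `(u x + t) / m`
modulo `2 ^ w.length`, where `x` is the value of `w`. -/
def ActsAffinelyAt (g : Equiv.Perm (List Bool)) (u t m : ℤ) (w : List Bool) : Prop :=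
  (g w).length = w.length ∧ 2 ^ w.length ∣ m * negabinary (g w) - (u * negabinary w + t)

def ActsAffinely (g : Equiv.Perm (List Bool)) (u t m : ℤ) : Prop :=
  ∀ w, ActsAffinelyAt g u t m w

namespace ActsAffinely

variable {g h : Equiv.Perm (List Bool)} {u t m u' t' m' k : ℤ}

theorem one : ActsAffinely 1 1 0 1 := fun w ↦ by simp [ActsAffinelyAt]

theorem mul (hg : ActsAffinely g u t m) (hh : ActsAffinely h u' t' m') :
    ActsAffinely (g * h) (u * u') (u * t' + m' * t) (m * m') := fun w ↦ by
  obtain ⟨hlg, k, hk⟩ := hg (h w)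
  obtain ⟨hlh, k', hk'⟩ := hh w
  rw [hlh] at hlg hk
  exact ⟨hlg, m' * k + u * k', by rw [Equiv.Perm.mul_apply]; linear_combination m' * hk + u * hk'⟩

theorem inv (hg : ActsAffinely g u t m) : ActsAffinely g⁻¹ m (-t) u := fun w ↦ by
  obtain ⟨hl, k, hk⟩ := hg (g⁻¹ w)
  simp only [Equiv.Perm.coe_inv, Equiv.apply_symm_apply] at hl hk
  rw [← hl] at hk
  refine ⟨hl.symm, -k, ?_⟩
  simp only [Equiv.Perm.coe_inv]
  linear_combination -hk

theorem of_mul_left (hg : ActsAffinely g (k * u) (k * t) (k * m)) (hk : Odd k) :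
    ActsAffinely g u t m := fun w ↦ by
  obtain ⟨hl, hd⟩ := hg w
  refine ⟨hl, (Int.isCoprime_two_left.mpr hk).pow_left.dvd_of_dvd_mul_left ?_⟩
  rwa [mul_sub, mul_add, ← mul_assoc, ← mul_assoc]

theorem pow (hg : ActsAffinely g u t m) (n : ℕ) :
    ∃ t', ActsAffinely (g ^ n) (u ^ n) t' (m ^ n) := by
  induction n with
  | zero => exact ⟨0, by simpa using one⟩
  | succ n ih =>
    obtain ⟨t', ht'⟩ := ih
    exact ⟨_, by simpa [pow_succ, mul_comm] using ht'.mul hg⟩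

theorem zpow (hg : ActsAffinely g 1 t 1) (k : ℤ) : ActsAffinely (g ^ k) 1 (k * t) 1 := by
  induction k using Int.induction_on with
  | zero => simpa using one
  | succ k ih => simpa [zpow_add_one, add_mul, add_comm] using ih.mul hg
  | pred k ih =>
    have := ih.mul hg.inv
    rw [← zpow_sub_one] at this
    convert this using 1 <;> ring

theorem unique (h₁ : ActsAffinely g u t m) (h₂ : ActsAffinely g u' t' m') :
    u * m' = u' * m ∧ t * m' = t' * m := by
  have := eq_zero_of_forall_two_pow_dvd_mul_negabinary_add (A := u' * m - u * m')
    (B := t' * m - t * m') fun w ↦ by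
      obtain ⟨-, k, hk⟩ := h₁ w
      obtain ⟨-, k', hk'⟩ := h₂ w
      exact ⟨m' * k - m * k', by linear_combination m' * hk - m * hk'⟩
  constructor <;> linarith [this.1, this.2]

theorem eq (hg : ActsAffinely g u t m) (hh : ActsAffinely h u' t' m') (hm : Odd m)
    (hm' : Odd m') (hu : u * m' = u' * m) (ht : t * m' = t' * m) : g = h := by
  ext1 w
  obtain ⟨hlg, k, hk⟩ := hg w
  obtain ⟨hlh, k', hk'⟩ := hh w
  refine eq_of_two_pow_dvd_negabinary_sub (hlg.trans hlh.symm) ?_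
  rw [hlg]
  refine (Int.isCoprime_two_left.mpr (hm.mul hm')).pow_left.dvd_of_dvd_mul_left
    ⟨m' * k - m * k', ?_⟩
  linear_combination m' * hk - m * hk' + negabinary w * hu + ht

theorem zpow_eq_zpow_iff (hg : ActsAffinely g u t m) (hum : |u| ≠ |m|)
    (hh : ActsAffinely h 1 1 1) {k q : ℤ} : g ^ k = h ^ q ↔ k = 0 ∧ q = 0 := by
  refine ⟨fun hkq ↦ ?_, by rintro ⟨rfl, rfl⟩; simp⟩
  have hq : ∀ q : ℤ, h ^ q = 1 → q = 0 := fun q hq ↦ by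
    linarith [((hh.zpow q).unique (by rw [hq]; exact one)).2]
  have hn : ∀ (n : ℕ) (q : ℤ), g ^ n = h ^ q → n = 0 := fun n q hnq ↦ by
    obtain ⟨t', ht'⟩ := hg.pow n
    have hpow : u ^ n = m ^ n := by linarith [(ht'.unique (by rw [hnq]; exact hh.zpow q)).1]
    by_contra hn0
    exact hum <| (pow_left_inj₀ (abs_nonneg u) (abs_nonneg m) hn0).mp <| by
      rw [← abs_pow, ← abs_pow, hpow]
  obtain ⟨n, rfl | rfl⟩ := Int.eq_nat_or_neg k
  · obtain rfl := hn n q (by simpa using hkq)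
    exact ⟨rfl, hq q (by simpa using hkq.symm)⟩
  · obtain rfl := hn n (-q) (by rw [zpow_neg, ← hkq, zpow_neg, inv_inv, zpow_natCast])
    exact ⟨rfl, hq q (by simpa using hkq.symm)⟩

end ActsAffinely

theorem WRec.actsAffinelyAt_cons {s : Bool} {f f₀ f₁ : Equiv.Perm (List Bool)}
    (hf : WRec s f f₀ f₁) {u t m t₀ t₁ : ℤ} {w : List Bool} (h₀ : ActsAffinelyAt f₀ u t₀ m w)
    (h₁ : ActsAffinelyAt f₁ u t₁ m w) (ht₀ : t = m * s.toNat - 2 * t₀)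
    (ht₁ : t = m * (!s).toNat - 2 * t₁ - u) (x : Bool) : ActsAffinelyAt f u t m (x :: w) := by
  obtain ⟨-, hf₀, hf₁⟩ := hf
  cases x
  · obtain ⟨hl, k, hk⟩ := h₀
    refine ⟨by simp [hf₀, hl], -k, ?_⟩
    simp only [hf₀, negabinary, List.length_cons, pow_succ, Bool.toNat_false, Nat.cast_zero]
    linear_combination (-2) * hk - ht₀
  · obtain ⟨hl, k, hk⟩ := h₁
    refine ⟨by simp [hf₁, hl], -k, ?_⟩
    simp only [hf₁, negabinary, List.length_cons, pow_succ, Bool.toNat_true, Nat.cast_one]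
    linear_combination (-2) * hk - ht₁

theorem actsAffinely_of_wRec {a b c : Equiv.Perm (List Bool)} (ha : WRec true a c b)
    (hb : WRec false b a c) (hc : WRec false c b a) :
    ActsAffinely a 3 1 9 ∧ ActsAffinely b 3 (-2) 9 ∧ ActsAffinely c 3 4 9 := by
  suffices ∀ w, ActsAffinelyAt a 3 1 9 w ∧ ActsAffinelyAt b 3 (-2) 9 w ∧
      ActsAffinelyAt c 3 4 9 w from
    ⟨fun w ↦ (this w).1, fun w ↦ (this w).2.1, fun w ↦ (this w).2.2⟩
  intro w
  induction w with
  | nil => simp [ActsAffinelyAt, ha.1, hb.1, hc.1]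
  | cons x w ih =>
    obtain ⟨ha', hb', hc'⟩ := ih
    exact ⟨ha.actsAffinelyAt_cons hc' hb' (by norm_num) (by norm_num) x,
      hb.actsAffinelyAt_cons ha' hc' (by norm_num) (by norm_num) x,
      hc.actsAffinelyAt_cons hb' ha' (by norm_num) (by norm_num) x⟩

theorem Subgroup.closure_triple_eq_closure_inv_mul_pair {G : Type*} [Group G] (a b : G) :
    Subgroup.closure {a, b, a * b⁻¹ * a} = Subgroup.closure {b⁻¹ * a, b} := by
  apply le_antisymm <;>
    simp only [Subgroup.closure_le, Set.insert_subset_iff, Set.singleton_subset_iff,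
      SetLike.mem_coe]
  · have hμ : b⁻¹ * a ∈ Subgroup.closure {b⁻¹ * a, b} := Subgroup.subset_closure (by simp)
    have hb : b ∈ Subgroup.closure {b⁻¹ * a, b} := Subgroup.subset_closure (by simp)
    have ha : a ∈ Subgroup.closure {b⁻¹ * a, b} := by simpa using mul_mem hb hμ
    exact ⟨ha, hb, mul_mem (mul_mem ha (inv_mem hb)) ha⟩
  · have ha : a ∈ Subgroup.closure {a, b, a * b⁻¹ * a} := Subgroup.subset_closure (by simp)
    have hb : b ∈ Subgroup.closure {a, b, a * b⁻¹ * a} := Subgroup.subset_closure (by simp)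
    exact ⟨mul_mem (inv_mem hb) ha, hb⟩

/-- Let `a, b, c` be the tree automorphisms defined by the wreath
recursion `a = σ(c,b)`, `b = (a,c)`, `c = (b,a)`.  Then `c = ab⁻¹a`, the elements
`μ = b⁻¹a` and `b` satisfy `b⁻¹μb = μ³` and both have infinite order, and the
homomorphism `BS(1,3) → ⟨a,b,c⟩` determined by `s ↦ b⁻¹a`, `t ↦ b` is an
isomorphism. -/
theorem generates_baumslag_solitar_1_3 (a b c : Equiv.Perm (List Bool))
    (ha : WRec true a c b) (hb : WRec false b a c) (hc : WRec false c b a) :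
    c = a * b⁻¹ * a ∧
    b⁻¹ * (b⁻¹ * a) * b = (b⁻¹ * a) ^ (3 : ℤ) ∧
    ¬ IsOfFinOrder (b⁻¹ * a) ∧
    ¬ IsOfFinOrder b ∧
    ∃ ψ : PresentedGroup (bsRels 3) →* Subgroup.closure {a, b, c},
      Function.Bijective ψ ∧
      (ψ (PresentedGroup.of 0) : Equiv.Perm (List Bool)) = b⁻¹ * a ∧
      (ψ (PresentedGroup.of 1) : Equiv.Perm (List Bool)) = b := by
  obtain ⟨ha, hb, hc⟩ := actsAffinely_of_wRec ha hb hc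
  -- `b⁻¹ * a` acts as `x ↦ (27 x + 27) / 27`
  have hμ : ActsAffinely (b⁻¹ * a) 1 1 1 := (hb.inv.mul ha).of_mul_left (k := 27) (by decide)
  have hcab : c = a * b⁻¹ * a :=
    hc.eq ((ha.mul hb.inv).mul ha) (by decide) (by decide) (by norm_num) (by norm_num)
  have hrel : b⁻¹ * (b⁻¹ * a) * b = (b⁻¹ * a) ^ (3 : ℤ) :=
    ((hb.inv.mul hμ).mul hb).eq (hμ.zpow 3) (by decide) (by decide) (by norm_num) (by norm_num)
  have hpow (k q : ℤ) : b ^ k = (b⁻¹ * a) ^ q ↔ k = 0 ∧ q = 0 :=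
    hb.zpow_eq_zpow_iff (by norm_num) hμ
  refine ⟨hcab, hrel, ?_, ?_, ?_⟩
  · rw [isOfFinOrder_iff_zpow_eq_one]
    rintro ⟨q, hq, hq1⟩
    exact hq ((hpow 0 q).mp (by rw [hq1, zpow_zero])).2
  · rw [isOfFinOrder_iff_zpow_eq_one]
    rintro ⟨k, hk, hk1⟩
    exact hk ((hpow k 0).mp (by rw [hk1, zpow_zero])).1
  have hrange : (bsLift hrel).range = Subgroup.closure {a, b, c} := by
    rw [range_bsLift, hcab, Subgroup.closure_triple_eq_closure_inv_mul_pair]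
  refine ⟨(MulEquiv.subgroupCongr hrange).toMonoidHom.comp (bsLift hrel).rangeRestrict,
    (MulEquiv.subgroupCongr hrange).bijective.comp ⟨?_, (bsLift hrel).rangeRestrict_surjective⟩,
    by simp, by simp⟩
  exact MonoidHom.rangeRestrict_injective_iff.mpr
    (bsLift_injective hrel fun k q ↦ (hpow k q).mp)
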